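/- Capped adaptive one-step contraction: let θ ∈ [0,1], p ∈ Δ_q, and W = {i : f_i(x) ≥ θ max_j f_j(x) + (1−θ) Σ_j p_j f_j(x)}. Then W is nonempty, and if q^k ∈ Δ_q is supported on W and x − x* ∈ range(B^{-1}Aᵀ), the expected next error satisfies Σ_i q^k_i ‖x^{+,i} − x*‖²_B ≤ (1 − θσ_∞²(B,S) − (1−θ)σ_p²(B,S)) ‖x − x*‖²_B, where x^{+,i} is the sketch-and-project update using sketch S_i. -/

import Mathlib

open Matrix BigOperators

/-- The four Penrose equations characterizing the Moore–Penrose pseudoinverse `P` of `M`. -/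
def PenroseInv {k : ℕ} (M P : Matrix (Fin k) (Fin k) ℝ) : Prop :=
  M * P * M = M ∧ P * M * P = P ∧ (M * P)ᵀ = M * P ∧ (P * M)ᵀ = P * M

/-- The projection matrix `Z = B^{-1/2} Aᵀ S (Sᵀ A B⁻¹ Aᵀ S)† Sᵀ A B^{-1/2}`, where `Bh`
plays the role of `B^{1/2}` and `P` that of the pseudoinverse `(Sᵀ A B⁻¹ Aᵀ S)†`. -/
noncomputable def Zmat {m n τ : ℕ} (A : Matrix (Fin m) (Fin n) ℝ) (B Bh : Matrix (Fin n) (Fin n) ℝ)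
    (S : Matrix (Fin m) (Fin τ) ℝ) (P : Matrix (Fin τ) (Fin τ) ℝ) :
    Matrix (Fin n) (Fin n) ℝ :=
  Bh⁻¹ * Aᵀ * (S * P * Sᵀ) * A * Bh⁻¹

/-- Sketched loss expressed via the projection `Z`:  `f(x) = ‖B^{1/2}(x - x*)‖²_Z`. -/
noncomputable def zloss {m n τ : ℕ} (A : Matrix (Fin m) (Fin n) ℝ)
    (B Bh : Matrix (Fin n) (Fin n) ℝ) (S : Matrix (Fin m) (Fin τ) ℝ)
    (P : Matrix (Fin τ) (Fin τ) ℝ) (xs x : Fin n → ℝ) : ℝ :=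
  Bh.mulVec (x - xs) ⬝ᵥ (Zmat A B Bh S P).mulVec (Bh.mulVec (x - xs))

/-- The spectral constant `σ_p²(B,S)`. -/
noncomputable def sigmaP {m n τ q : ℕ} (A : Matrix (Fin m) (Fin n) ℝ)
    (B Bh : Matrix (Fin n) (Fin n) ℝ) (S : Fin q → Matrix (Fin m) (Fin τ) ℝ)
    (P : Fin q → Matrix (Fin τ) (Fin τ) ℝ) (p : Fin q → ℝ) : ℝ :=
  sInf {r : ℝ | ∃ v, v ≠ 0 ∧ v ∈ Set.range (B⁻¹ * Aᵀ).mulVec ∧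
    r = Bh.mulVec v ⬝ᵥ (∑ i, p i • Zmat A B Bh (S i) (P i)).mulVec (Bh.mulVec v) /
      (v ⬝ᵥ B.mulVec v)}

/-- The spectral constant `σ_∞²(B,S)`. -/
noncomputable def sigmaInf {m n τ q : ℕ} (A : Matrix (Fin m) (Fin n) ℝ)
    (B Bh : Matrix (Fin n) (Fin n) ℝ) (S : Fin q → Matrix (Fin m) (Fin τ) ℝ)
    (P : Fin q → Matrix (Fin τ) (Fin τ) ℝ) : ℝ :=
  sInf {r : ℝ | ∃ v, v ≠ 0 ∧ v ∈ Set.range (B⁻¹ * Aᵀ).mulVec ∧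
    r = ⨆ i, Bh.mulVec v ⬝ᵥ (Zmat A B Bh (S i) (P i)).mulVec (Bh.mulVec v) /
      (v ⬝ᵥ B.mulVec v)}

/-!
Write `e = x - x*` and `Q_i = Aᵀ S_i P_i S_iᵀ A`, so that `f_i(x) = eᵀ Q_i e`. The Penrose
equations make `P_i` symmetric positive semidefinite and `N_i = B⁻¹ Q_i` a `B`-orthogonal
projection (`N_iᵀ B N_i = B N_i`), so the sketch-and-project step removes exactly `f_i(x)`
from `‖e‖²_B`, and the expected error is `‖e‖²_B − Σ q_i f_i(x)`. The maximiser of `f` lies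
in `W`; a distribution supported on `W` has `Σ q_i f_i ≥ θ max f + (1−θ) Σ p_i f_i`; and
since `e` lies in `range(B⁻¹Aᵀ)`, the Rayleigh-quotient definitions of `σ_∞²` and `σ_p²`
bound these two terms below by `σ_∞² ‖e‖²_B` and `σ_p² ‖e‖²_B`.
-/

theorem sInf_ratio_mul_le {E : Type*} [Zero E] {R : Set E} {G c : E → ℝ} (hG : ∀ v, 0 ≤ G v)
    (hc : ∀ v, v ≠ 0 → 0 < c v) (hc0 : c 0 = 0) {v : E} (hv : v ∈ R) :
    sInf {r : ℝ | ∃ v, v ≠ 0 ∧ v ∈ R ∧ r = G v / c v} * c v ≤ G v := by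
  rcases eq_or_ne v 0 with rfl | hv0
  · simpa [hc0] using hG 0
  · have hbdd : BddBelow {r : ℝ | ∃ v, v ≠ 0 ∧ v ∈ R ∧ r = G v / c v} :=
      ⟨0, by rintro _ ⟨w, hw, -, rfl⟩; exact div_nonneg (hG w) (hc w hw).le⟩
    exact (le_div_iff₀ (hc v hv0)).mp (csInf_le hbdd ⟨v, hv0, hv, rfl⟩)

theorem exists_capped_threshold_le {ι : Type*} [Fintype ι] [Nonempty ι] {θ : ℝ}
    (hθ : θ ≤ 1) {p : ι → ℝ} (hp : ∀ i, 0 ≤ p i) (hp1 : ∑ i, p i = 1) (f : ι → ℝ) :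
    ∃ i, θ * (⨆ j, f j) + (1 - θ) * ∑ j, p j * f j ≤ f i := by
  obtain ⟨i, hi⟩ := Finite.exists_max f
  have hsup : (⨆ j, f j) = f i := le_antisymm (ciSup_le hi) (le_ciSup (Finite.bddAbove_range f) i)
  have havg : ∑ j, p j * f j ≤ f i :=
    calc ∑ j, p j * f j ≤ ∑ j, p j * f i :=
          Finset.sum_le_sum fun j _ => mul_le_mul_of_nonneg_left (hi j) (hp j)
      _ = f i := by rw [← Finset.sum_mul, hp1, one_mul]
  refine ⟨i, ?_⟩
  rw [hsup]
  nlinarith [mul_le_mul_of_nonneg_left havg (sub_nonneg.mpr hθ)]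

theorem le_sum_mul_of_supported {ι : Type*} [Fintype ι] {w f : ι → ℝ} {c : ℝ}
    (hw : ∀ i, 0 ≤ w i) (hw1 : ∑ i, w i = 1) (hsupp : ∀ i, ¬ c ≤ f i → w i = 0) :
    c ≤ ∑ i, w i * f i :=
  calc c = ∑ i, w i * c := by rw [← Finset.sum_mul, hw1, one_mul]
    _ ≤ ∑ i, w i * f i := Finset.sum_le_sum fun i _ => by
      by_cases h : c ≤ f i
      · exact mul_le_mul_of_nonneg_left h (hw i)
      · simp [hsupp i h]

namespace PenroseInv

variable {k : ℕ} {M P : Matrix (Fin k) (Fin k) ℝ}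

theorem unique {P' : Matrix (Fin k) (Fin k) ℝ} (h : PenroseInv M P) (h' : PenroseInv M P') :
    P = P' := by
  obtain ⟨a, b, c, d⟩ := h
  obtain ⟨a', b', c', d'⟩ := h'
  have hMP : M * P = M * P' :=
    calc M * P = (M * P' * (M * P))ᵀ := by rw [← Matrix.mul_assoc, a', c]
      _ = M * P * (M * P') := by rw [transpose_mul, c, c']
      _ = M * P' := by rw [← Matrix.mul_assoc, a]
  have hPM : P * M = P' * M :=
    calc P * M = (P * (M * P' * M))ᵀ := by rw [a', d]
      _ = (P * M * (P' * M))ᵀ := by simp only [Matrix.mul_assoc]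
      _ = P' * M * (P * M) := by rw [transpose_mul, d, d']
      _ = P' * M := by rw [Matrix.mul_assoc, ← Matrix.mul_assoc M, a]
  calc P = P * M * P := b.symm
    _ = P' * M * P' := by rw [Matrix.mul_assoc, hMP, ← Matrix.mul_assoc, hPM]
    _ = P' := b'

theorem transpose (h : PenroseInv M P) : PenroseInv Mᵀ Pᵀ := by
  obtain ⟨a, b, c, d⟩ := h
  refine ⟨?_, ?_, ?_, ?_⟩
  · rw [← transpose_mul, ← transpose_mul, ← Matrix.mul_assoc, a]
  · rw [← transpose_mul, ← transpose_mul, ← Matrix.mul_assoc, b]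
  · rw [← transpose_mul, transpose_transpose, d]
  · rw [← transpose_mul, transpose_transpose, c]

theorem transpose_eq (hM : M.IsSymm) (h : PenroseInv M P) : Pᵀ = P :=
  (hM.eq ▸ h.transpose).unique h

theorem posSemidef (hM : M.PosSemidef) (h : PenroseInv M P) : P.PosSemidef := by
  have hP : Pᵀ = P := h.transpose_eq (isHermitian_iff_isSymm.mp hM.isHermitian)
  simpa [hP, h.2.1] using hM.conjTranspose_mul_mul_same P

end PenroseInv

theorem mulVec_dotProduct_mulVec_mulVec {R ι κ : Type*} [CommSemiring R] [Fintype ι] [Fintype κ]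
    (M : Matrix ι κ R) (N : Matrix ι ι R) (v : κ → R) :
    (M *ᵥ v) ⬝ᵥ N *ᵥ (M *ᵥ v) = v ⬝ᵥ (Mᵀ * N * M) *ᵥ v := by
  rw [← mulVec_mulVec, ← mulVec_mulVec, dotProduct_mulVec v, vecMul_transpose]

theorem sub_mulVec_dotProduct_mulVec_sub_mulVec {R ι : Type*} [CommRing R] [Fintype ι]
    {B N : Matrix ι ι R} (hB : B.IsSymm) (hN : Nᵀ * B * N = B * N) (v : ι → R) :
    (v - N *ᵥ v) ⬝ᵥ B *ᵥ (v - N *ᵥ v) = v ⬝ᵥ B *ᵥ v - v ⬝ᵥ (B * N) *ᵥ v := by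
  have hcross : (N *ᵥ v) ⬝ᵥ B *ᵥ v = v ⬝ᵥ (B * N) *ᵥ v := by
    rw [← mulVec_mulVec, dotProduct_mulVec, ← mulVec_transpose, hB.eq, dotProduct_comm]
  have hquad : (N *ᵥ v) ⬝ᵥ B *ᵥ (N *ᵥ v) = v ⬝ᵥ (B * N) *ᵥ v := by
    rw [mulVec_dotProduct_mulVec_mulVec, hN]
  rw [mulVec_sub, sub_dotProduct, dotProduct_sub, dotProduct_sub, hcross, hquad, mulVec_mulVec]
  ring

theorem dotProduct_mulVec_self_pos {ι : Type*} [Fintype ι] {B : Matrix ι ι ℝ} (hB : B.PosDef)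
    {v : ι → ℝ} (hv : v ≠ 0) : 0 < v ⬝ᵥ B *ᵥ v := by
  simpa using hB.dotProduct_mulVec_pos hv

section Sketch

variable {m n τ : ℕ} (A : Matrix (Fin m) (Fin n) ℝ) {B Bh : Matrix (Fin n) (Fin n) ℝ}
  {S : Matrix (Fin m) (Fin τ) ℝ} {P : Matrix (Fin τ) (Fin τ) ℝ}

theorem posSemidef_sketch_gram (hB : B.PosDef) : (Sᵀ * A * B⁻¹ * Aᵀ * S).PosSemidef := by
  simpa [transpose_mul, Matrix.mul_assoc] using
    hB.inv.posSemidef.conjTranspose_mul_mul_same (Aᵀ * S)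

theorem posSemidef_Zmat (hB : B.PosDef) (hBh : Bh.IsSymm)
    (hP : PenroseInv (Sᵀ * A * B⁻¹ * Aᵀ * S) P) : (Zmat A B Bh S P).PosSemidef := by
  simpa [Zmat, transpose_mul, hBh.inv.eq, Matrix.mul_assoc] using
    (hP.posSemidef (posSemidef_sketch_gram A hB)).conjTranspose_mul_mul_same (Sᵀ * A * Bh⁻¹)

theorem zloss_eq_dotProduct_mulVec (hBh : Bh.IsSymm) (hBh' : IsUnit Bh.det) (xs x : Fin n → ℝ) :
    zloss A B Bh S P xs x = (x - xs) ⬝ᵥ (Aᵀ * (S * P * Sᵀ) * A) *ᵥ (x - xs) := by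
  have hZ : Bhᵀ * Zmat A B Bh S P * Bh = Aᵀ * (S * P * Sᵀ) * A := by
    simp only [hBh.eq, Zmat, Matrix.mul_assoc, nonsing_inv_mul _ hBh', Matrix.mul_one,
      mul_nonsing_inv_cancel_left _ _ hBh']
  rw [zloss, mulVec_dotProduct_mulVec_mulVec, hZ]

theorem dotProduct_mulVec_sketch_step (hB : B.PosDef)
    (hP : PenroseInv (Sᵀ * A * B⁻¹ * Aᵀ * S) P) (v : Fin n → ℝ) :
    (v - (B⁻¹ * Aᵀ * (S * P * Sᵀ)) *ᵥ (A *ᵥ v)) ⬝ᵥ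
        B *ᵥ (v - (B⁻¹ * Aᵀ * (S * P * Sᵀ)) *ᵥ (A *ᵥ v))
      = v ⬝ᵥ B *ᵥ v - v ⬝ᵥ (Aᵀ * (S * P * Sᵀ) * A) *ᵥ v := by
  have hB' : IsUnit B.det := (isUnit_iff_isUnit_det B).mp hB.isUnit
  have hBN : B * (B⁻¹ * Aᵀ * (S * P * Sᵀ) * A) = Aᵀ * (S * P * Sᵀ) * A := by
    simp only [Matrix.mul_assoc, mul_nonsing_inv_cancel_left _ _ hB']
  have hB_symm : B.IsSymm := isHermitian_iff_isSymm.mp hB.isHermitian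
  have hP_symm : Pᵀ = P :=
    hP.transpose_eq (isHermitian_iff_isSymm.mp (posSemidef_sketch_gram A hB).isHermitian)
  have hNBN : (B⁻¹ * Aᵀ * (S * P * Sᵀ) * A)ᵀ * B * (B⁻¹ * Aᵀ * (S * P * Sᵀ) * A)
      = Aᵀ * (S * P * Sᵀ) * A := by
    calc _ = Aᵀ * S * (Pᵀ * (Sᵀ * A * B⁻¹ * Aᵀ * S) * P) * Sᵀ * A := by
          rw [Matrix.mul_assoc _ B, hBN]
          simp only [transpose_mul, transpose_transpose, hB_symm.inv.eq, Matrix.mul_assoc]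
      _ = Aᵀ * (S * P * Sᵀ) * A := by
          rw [hP_symm, hP.2.1]
          simp only [Matrix.mul_assoc]
  rw [mulVec_mulVec, sub_mulVec_dotProduct_mulVec_sub_mulVec hB_symm (hNBN.trans hBN.symm), hBN]

theorem sketch_update_error_eq_sub_zloss
    (hB : B.PosDef) (hBh : Bh.IsSymm) (hBh' : IsUnit Bh.det)
    (hP : PenroseInv (Sᵀ * A * B⁻¹ * Aᵀ * S) P) {b : Fin m → ℝ} {x xs : Fin n → ℝ}
    (hxs : A *ᵥ xs = b) :
    (x - (B⁻¹ * Aᵀ * (S * P * Sᵀ)) *ᵥ (A *ᵥ x - b) - xs) ⬝ᵥ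
        B *ᵥ (x - (B⁻¹ * Aᵀ * (S * P * Sᵀ)) *ᵥ (A *ᵥ x - b) - xs)
      = (x - xs) ⬝ᵥ B *ᵥ (x - xs) - zloss A B Bh S P xs x := by
  rw [zloss_eq_dotProduct_mulVec A hBh hBh', ← hxs, ← mulVec_sub, sub_right_comm]
  exact dotProduct_mulVec_sketch_step A hB hP (x - xs)

end Sketch

section Spectral

variable {m n τ q : ℕ} (A : Matrix (Fin m) (Fin n) ℝ) {B Bh : Matrix (Fin n) (Fin n) ℝ}
  {S : Fin q → Matrix (Fin m) (Fin τ) ℝ} {P : Fin q → Matrix (Fin τ) (Fin τ) ℝ}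

theorem sigmaInf_mul_le (hB : B.PosDef) (hBh : Bh.IsSymm)
    (hP : ∀ i, PenroseInv ((S i)ᵀ * A * B⁻¹ * Aᵀ * S i) (P i)) {x xs : Fin n → ℝ}
    (hx : x - xs ∈ Set.range (B⁻¹ * Aᵀ).mulVec) :
    sigmaInf A B Bh S P * ((x - xs) ⬝ᵥ B *ᵥ (x - xs))
      ≤ ⨆ i, zloss A B Bh (S i) (P i) xs x := by
  have hdiv : ∀ (v : Fin n → ℝ) (f : Fin q → ℝ),
      (⨆ i, f i / (v ⬝ᵥ B *ᵥ v)) = (⨆ i, f i) / (v ⬝ᵥ B *ᵥ v) := fun v f => by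
    rcases eq_or_ne v 0 with rfl | hv
    · simp
    · simp only [div_eq_mul_inv,
        Real.iSup_mul_of_nonneg (inv_nonneg.mpr (dotProduct_mulVec_self_pos hB hv).le)]
  rw [sigmaInf]
  simp only [hdiv]
  exact sInf_ratio_mul_le
    (fun v => Real.iSup_nonneg fun i => by
      simpa using (posSemidef_Zmat A hB hBh (hP i)).dotProduct_mulVec_nonneg (Bh *ᵥ v))
    (fun v hv => dotProduct_mulVec_self_pos hB hv) (by simp) hx

theorem sigmaP_mul_le (hB : B.PosDef) (hBh : Bh.IsSymm)
    (hP : ∀ i, PenroseInv ((S i)ᵀ * A * B⁻¹ * Aᵀ * S i) (P i)) {p : Fin q → ℝ}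
    (hp : ∀ i, 0 ≤ p i) {x xs : Fin n → ℝ} (hx : x - xs ∈ Set.range (B⁻¹ * Aᵀ).mulVec) :
    sigmaP A B Bh S P p * ((x - xs) ⬝ᵥ B *ᵥ (x - xs))
      ≤ ∑ i, p i * zloss A B Bh (S i) (P i) xs x := by
  have hZ : (∑ i, p i • Zmat A B Bh (S i) (P i)).PosSemidef :=
    posSemidef_sum _ fun i _ => (posSemidef_Zmat A hB hBh (hP i)).smul (hp i)
  calc _ ≤ Bh *ᵥ (x - xs) ⬝ᵥ (∑ i, p i • Zmat A B Bh (S i) (P i)) *ᵥ (Bh *ᵥ (x - xs)) := by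
        rw [sigmaP]
        exact sInf_ratio_mul_le (c := fun v => v ⬝ᵥ B *ᵥ v)
          (fun v => by simpa using hZ.dotProduct_mulVec_nonneg (Bh *ᵥ v))
          (fun v hv => dotProduct_mulVec_self_pos hB hv) (by simp) hx
    _ = ∑ i, p i * zloss A B Bh (S i) (P i) xs x := by
        simp only [sum_mulVec, dotProduct_sum, smul_mulVec, dotProduct_smul, smul_eq_mul,
          zloss]

end Spectral

theorem capped_adaptive_one_step_general {m n τ q : ℕ} (hq : 0 < q)
    (A : Matrix (Fin m) (Fin n) ℝ) (b : Fin m → ℝ)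
    (B Bh : Matrix (Fin n) (Fin n) ℝ)
    (hB : B.PosDef) (hBh : Bh.PosDef)
    (S : Fin q → Matrix (Fin m) (Fin τ) ℝ) (P : Fin q → Matrix (Fin τ) (Fin τ) ℝ)
    (hP : ∀ i, PenroseInv ((S i)ᵀ * A * B⁻¹ * Aᵀ * S i) (P i))
    (θ : ℝ) (hθ0 : 0 ≤ θ) (hθ1 : θ ≤ 1)
    (p : Fin q → ℝ) (hp : ∀ i, 0 ≤ p i) (hp1 : ∑ i, p i = 1)
    (x xs : Fin n → ℝ) (hxs : A.mulVec xs = b)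
    (hx : x - xs ∈ Set.range (B⁻¹ * Aᵀ).mulVec)
    (qk : Fin q → ℝ) (hqk : ∀ i, 0 ≤ qk i) (hqk1 : ∑ i, qk i = 1)
    (hsupp : ∀ i, ¬ (θ * (⨆ j, zloss A B Bh (S j) (P j) xs x)
        + (1 - θ) * ∑ j, p j * zloss A B Bh (S j) (P j) xs x
      ≤ zloss A B Bh (S i) (P i) xs x) → qk i = 0) :
    (∃ i, θ * (⨆ j, zloss A B Bh (S j) (P j) xs x)
        + (1 - θ) * ∑ j, p j * zloss A B Bh (S j) (P j) xs x
      ≤ zloss A B Bh (S i) (P i) xs x) ∧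
    ∑ i, qk i *
        ((x - (B⁻¹ * Aᵀ * (S i * P i * (S i)ᵀ)).mulVec (A.mulVec x - b) - xs) ⬝ᵥ
          B.mulVec
            (x - (B⁻¹ * Aᵀ * (S i * P i * (S i)ᵀ)).mulVec (A.mulVec x - b) - xs))
      ≤ (1 - θ * sigmaInf A B Bh S P - (1 - θ) * sigmaP A B Bh S P p)
          * ((x - xs) ⬝ᵥ B.mulVec (x - xs)) := by
  have : Nonempty (Fin q) := ⟨⟨0, hq⟩⟩
  have hBh_symm : Bh.IsSymm := isHermitian_iff_isSymm.mp hBh.isHermitian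
  have hBh_det : IsUnit Bh.det := (isUnit_iff_isUnit_det Bh).mp hBh.isUnit
  refine ⟨exists_capped_threshold_le hθ1 hp hp1 _, ?_⟩
  have hσInf := sigmaInf_mul_le A hB hBh_symm hP hx
  have hσP := sigmaP_mul_le A hB hBh_symm hP hp hx
  have hthreshold := le_sum_mul_of_supported hqk hqk1 hsupp
  calc _ = (x - xs) ⬝ᵥ B *ᵥ (x - xs) - ∑ i, qk i * zloss A B Bh (S i) (P i) xs x := by
        simp_rw [sketch_update_error_eq_sub_zloss A hB hBh_symm hBh_det (hP _) hxs, mul_sub,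
          Finset.sum_sub_distrib, ← Finset.sum_mul, hqk1, one_mul]
    _ ≤ _ := by
        linarith [mul_le_mul_of_nonneg_left hσInf hθ0,
          mul_le_mul_of_nonneg_left hσP (sub_nonneg.mpr hθ1)]

/-- Capped adaptive one-step contraction: the capped index set `W` is nonempty, and any
probability vector supported on `W` yields expected contraction by at least
`1 − θσ_∞² − (1−θ)σ_p²`. -/
theorem capped_adaptive_one_step {m n τ q : ℕ} (hq : 0 < q)
    (A : Matrix (Fin m) (Fin n) ℝ) (b : Fin m → ℝ)
    (B Bh : Matrix (Fin n) (Fin n) ℝ)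
    (hB : B.PosDef) (hBh : Bh.PosDef) (hBhB : Bh * Bh = B)
    (S : Fin q → Matrix (Fin m) (Fin τ) ℝ) (P : Fin q → Matrix (Fin τ) (Fin τ) ℝ)
    (hP : ∀ i, PenroseInv ((S i)ᵀ * A * B⁻¹ * Aᵀ * S i) (P i))
    (θ : ℝ) (hθ0 : 0 ≤ θ) (hθ1 : θ ≤ 1)
    (p : Fin q → ℝ) (hp : ∀ i, 0 ≤ p i) (hp1 : ∑ i, p i = 1)
    (x xs : Fin n → ℝ) (hxs : A.mulVec xs = b)
    (hx : x - xs ∈ Set.range (B⁻¹ * Aᵀ).mulVec)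
    (qk : Fin q → ℝ) (hqk : ∀ i, 0 ≤ qk i) (hqk1 : ∑ i, qk i = 1)
    (hsupp : ∀ i, ¬ (θ * (⨆ j, zloss A B Bh (S j) (P j) xs x)
        + (1 - θ) * ∑ j, p j * zloss A B Bh (S j) (P j) xs x
      ≤ zloss A B Bh (S i) (P i) xs x) → qk i = 0) :
    (∃ i, θ * (⨆ j, zloss A B Bh (S j) (P j) xs x)
        + (1 - θ) * ∑ j, p j * zloss A B Bh (S j) (P j) xs x
      ≤ zloss A B Bh (S i) (P i) xs x) ∧
    ∑ i, qk i *
        ((x - (B⁻¹ * Aᵀ * (S i * P i * (S i)ᵀ)).mulVec (A.mulVec x - b) - xs) ⬝ᵥ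
          B.mulVec
            (x - (B⁻¹ * Aᵀ * (S i * P i * (S i)ᵀ)).mulVec (A.mulVec x - b) - xs))
      ≤ (1 - θ * sigmaInf A B Bh S P - (1 - θ) * sigmaP A B Bh S P p)
          * ((x - xs) ⬝ᵥ B.mulVec (x - xs)) :=
  capped_adaptive_one_step_general hq A b B Bh hB hBh S P hP θ hθ0 hθ1 p hp hp1 x xs hxs hx qk hqk
    hqk1 hsupp
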